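/- arXiv:2006.02249 — 2 statements merged into one kernel-verified Lean document; each statement's English description precedes it below -/
import Mathlib

section
/- Let (𝔾,σ) be a BMG explained by tree (T,σ), and let ab|b' and cb'|b be informative triples for (𝔾,σ). Then there exist two distinct children v₁, v₂ of lca_T(a,c) such that a and b are strict descendants of v₁, and b' and c are strict descendants of v₂. -/
/-- A finite rooted tree, given by a parent function: every vertex reaches the
root along the parent chain. -/
structure PTree (V : Type*) where
  parent : V → Option V
  root : V
  root_parent : parent root = none
  connected : ∀ v : V, Relation.ReflTransGen (fun a b => parent a = some b) v root

namespace PTree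

variable {V C : Type*}

/-- `T.anc a b` : `b` is an ancestor of `a` (i.e. `a ⪯ b` in the ancestor order). -/
def anc (T : PTree V) (a b : V) : Prop :=
  Relation.ReflTransGen (fun x y => T.parent x = some y) a b

/-- `v` is a child of `u`. -/
def child (T : PTree V) (v u : V) : Prop := T.parent v = some u

/-- A leaf is a vertex without children. -/
def isLeaf (T : PTree V) (v : V) : Prop := ∀ w, ¬ T.child w v

/-- `u` is the last common ancestor of `x` and `y`. -/
def isLCA (T : PTree V) (u x y : V) : Prop :=
  T.anc x u ∧ T.anc y u ∧ ∀ w, T.anc x w → T.anc y w → T.anc u w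

/-- `σ(L(T(v)))` : the set of colors of the leaves of the subtree rooted at `v`. -/
def leafColors (T : PTree V) (σ : V → C) (v : V) : Set C :=
  {c | ∃ x, T.isLeaf x ∧ T.anc x v ∧ σ x = c}

/-- `y` is a best match of `x` in `(T,σ)`. -/
def bestMatch (T : PTree V) (σ : V → C) (x y : V) : Prop :=
  T.isLeaf x ∧ T.isLeaf y ∧ σ x ≠ σ y ∧
    ∀ y', T.isLeaf y' → σ y' = σ y →
      ∀ u u', T.isLCA u x y → T.isLCA u' x y' → T.anc u u'

/-- `x` and `y` are reciprocal best matches, i.e. `xy` is an edge of the BMG `G(T,σ)`. -/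
def edge (T : PTree V) (σ : V → C) (x y : V) : Prop :=
  T.bestMatch σ x y ∧ T.bestMatch σ y x

/-- Every inner vertex (other than the planted root) has exactly two children. -/
def Binary (T : PTree V) : Prop :=
  ∀ u : V, u ≠ T.root → ¬ T.isLeaf u →
    ∃ v₁ v₂, v₁ ≠ v₂ ∧ T.child v₁ u ∧ T.child v₂ u ∧
      ∀ w, T.child w u → w = v₁ ∨ w = v₂

/-- Adjacency in the color-set intersection graph `𝔠_T(u)`. -/
def csiAdj (T : PTree V) (σ : V → C) (u a b : V) : Prop :=
  a ≠ b ∧ T.child a u ∧ T.child b u ∧ (T.leafColors σ a ∩ T.leafColors σ b).Nonempty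

/-- `a` and `b` lie in the same connected component of `𝔠_T(u)`. -/
def sameComp (T : PTree V) (σ : V → C) (u a b : V) : Prop :=
  Relation.ReflTransGen (T.csiAdj σ u) a b

/-- `S` is a connected component of `𝔠_T(u)` with more than one element. -/
def IsBigComp (T : PTree V) (σ : V → C) (u : V) (S : Set V) : Prop :=
  (∃ a, T.child a u ∧ S = {b | T.sameComp σ u a b}) ∧ ∃ a ∈ S, ∃ b ∈ S, a ≠ b

end PTree

/-- `(T, σT)` explains the colored digraph `(E, σ)` on the gene set `L`, with
`ι` identifying the genes with the leaves of `T`. -/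
def Explains {V L C : Type*} (T : PTree V) (ι : L → V) (σT : V → C) (σ : L → C)
    (E : L → L → Prop) : Prop :=
  Function.Injective ι ∧ (∀ l, T.isLeaf (ι l)) ∧ (∀ v, T.isLeaf v → ∃ l, ι l = v) ∧
    (∀ l, σT (ι l) = σ l) ∧ ∀ x y, E x y ↔ T.bestMatch σT (ι x) (ι y)

/-- The parent function after contracting the edge `uv` (with `v` a child of `u`). -/
def contractedParent {V : Type*} [DecidableEq V] (T : PTree V) (u v w : V) : Option V :=
  (T.parent w).map (fun p => if p = v then u else p)

/-- One step towards the contracted parent when contracting all edges whose lower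
endpoints form the set `A`. -/
def multiContractStep {V : Type*} (T : PTree V) (A : Set V) (a b : V) : Prop :=
  T.parent a = some b ∧ b ∈ A

/-- Event types for inner vertices of an event-labeled gene tree. -/
inductive Event : Type
  | speciation
  | duplication

namespace PTree

variable {V C : Type*}

lemma step_unique (T : PTree V) : Relator.RightUnique (fun x y => T.parent x = some y) := by
  intro a b c h1 h2
  rw [h1] at h2
  exact Option.some.inj h2

lemma anc_total (T : PTree V) {z x y : V} (hx : T.anc z x) (hy : T.anc z y) :
    T.anc x y ∨ T.anc y x :=
  Relation.ReflTransGen.total_of_right_unique T.step_unique hx hy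

lemma anc_antisymm (T : PTree V) {a b : V} (h1 : T.anc a b) (h2 : T.anc b a) : a = b := by
  have H : ∀ x, T.anc x T.root → ∀ y, T.anc x y → T.anc y x → x = y := by
    intro x hx
    induction hx using Relation.ReflTransGen.head_induction_on with
    | refl =>
      intro y hy _
      rcases hy.cases_head with rfl | ⟨z, hz, _⟩
      · rfl
      · rw [T.root_parent] at hz; exact nomatch hz
    | @head p q h' hq ih =>
      intro y hy hya
      rcases hy.cases_head with rfl | ⟨z, hz, hzy⟩
      · rfl
      · have hzq : z = q := T.step_unique hz h'
        rw [hzq] at hzy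
        have h3 : T.anc y q := hya.trans (Relation.ReflTransGen.single h')
        have h4 : q = y := ih y hzy h3
        have h5 : q = p := ih p (by rw [h4]; exact hya) (Relation.ReflTransGen.single h')
        exact h5.symm.trans h4
  exact H a (T.connected a) b h1 h2

lemma leaf_eq (T : PTree V) {x y : V} (hy : T.isLeaf y) (h : T.anc x y) : x = y := by
  rcases h.cases_tail with h' | ⟨z, _, hzy⟩
  · exact h'.symm
  · exact absurd hzy (hy z)

lemma child_ne (T : PTree V) {v u : V} (h : T.child v u) : v ≠ u := by
  intro hvu
  rw [hvu] at h
  have H : ∀ x, T.anc x T.root → x ≠ u := by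
    intro x hx
    induction hx using Relation.ReflTransGen.head_induction_on with
    | refl =>
      intro h2
      rw [← h2] at h
      have h3 : T.parent T.root = some T.root := h
      rw [T.root_parent] at h3
      exact nomatch h3
    | @head p q h' _ ih =>
      intro hpu
      rw [hpu] at h'
      exact ih (T.step_unique h' h)
  exact H u (T.connected u) rfl

lemma lca_exists (T : PTree V) (x y : V) : ∃ u, T.isLCA u x y := by
  have H : ∀ z, T.anc z T.root →
      ∃ u, T.anc z u ∧ T.anc y u ∧ ∀ w, T.anc z w → T.anc y w → T.anc u w := by
    intro z hz
    induction hz using Relation.ReflTransGen.head_induction_on with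
    | refl => exact ⟨T.root, .refl, T.connected y, fun w hw _ => hw⟩
    | @head p q h' _ ih =>
      by_cases hy : T.anc y p
      · exact ⟨p, .refl, hy, fun w hw _ => hw⟩
      · obtain ⟨u, h1, h2, h3⟩ := ih
        refine ⟨u, Relation.ReflTransGen.head h' h1, h2, fun w hw hyw => ?_⟩
        rcases hw.cases_head with rfl | ⟨z', hz', hz'w⟩
        · exact absurd hyw hy
        · have : z' = q := T.step_unique hz' h'
          exact h3 w (this ▸ hz'w) hyw
  exact H x (T.connected x)

lemma lca_unique (T : PTree V) {u u' x y : V} (h : T.isLCA u x y) (h' : T.isLCA u' x y) :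
    u = u' :=
  T.anc_antisymm (h.2.2 u' h'.1 h'.2.1) (h'.2.2 u h.1 h.2.1)

lemma anc_of_strict (T : PTree V) {v u x : V} (h : T.child v u) (hvx : T.anc v x)
    (hne : v ≠ x) : T.anc u x := by
  rcases hvx.cases_head with rfl | ⟨z, hz, hzx⟩
  · exact absurd rfl hne
  · have : u = z := T.step_unique h hz
    rwa [this]

lemma exists_child (T : PTree V) {x u : V} (h : T.anc x u) (hne : x ≠ u) :
    ∃ v, T.child v u ∧ T.anc x v := by
  rcases h.cases_tail with h' | ⟨c, hc, hcu⟩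
  · exact absurd h'.symm hne
  · exact ⟨c, hcu, hc⟩

end PTree

/-- If `ab|b'` and `cb'|b` are informative triples for a BMG
`(𝔾,σ)`, then every tree explaining it has two distinct children `v₁, v₂` of
`lca(a,c)` with `a, b` strictly below `v₁` and `b', c` strictly below `v₂`. -/
theorem stmt_3 {V L C : Type*} [Fintype V] (T : PTree V) (ι : L → V)
    (σT : V → C) (σ : L → C) (E : L → L → Prop)
    (hexp : Explains T ι σT σ E)
    (a b b' c : L) (hbne : b ≠ b')
    (hab : σ a ≠ σ b) (hbb' : σ b = σ b') (hE1 : E a b) (hnE1 : ¬ E a b')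
    (hcb : σ c ≠ σ b') (hE2 : E c b') (hnE2 : ¬ E c b)
    (u : V) (hu : T.isLCA u (ι a) (ι c)) :
    ∃ v₁ v₂, v₁ ≠ v₂ ∧ T.child v₁ u ∧ T.child v₂ u ∧
      T.anc (ι a) v₁ ∧ ι a ≠ v₁ ∧ T.anc (ι b) v₁ ∧ ι b ≠ v₁ ∧
      T.anc (ι b') v₂ ∧ ι b' ≠ v₂ ∧ T.anc (ι c) v₂ ∧ ι c ≠ v₂ := by
  obtain ⟨hinj, hleaf, _, hcol, hiff⟩ := hexp
  set A := ι a with hAdef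
  set B := ι b with hBdef
  set B' := ι b' with hB'def
  set Cg := ι c with hCdef
  have hAl : T.isLeaf A := hleaf a
  have hBl : T.isLeaf B := hleaf b
  have hB'l : T.isLeaf B' := hleaf b'
  have hCl : T.isLeaf Cg := hleaf c
  have hσBB' : σT B = σT B' := by rw [hcol, hcol, hbb']
  obtain ⟨xb, hxb⟩ := T.lca_exists A B
  obtain ⟨xb', hxb'⟩ := T.lca_exists A B'
  obtain ⟨yb, hyb⟩ := T.lca_exists Cg B
  obtain ⟨yb', hyb'⟩ := T.lca_exists Cg B'
  have bm1 : T.bestMatch σT A B := (hiff a b).1 hE1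
  have bm2 : T.bestMatch σT Cg B' := (hiff c b').1 hE2
  have hxx : T.anc xb xb' := bm1.2.2.2 B' hB'l hσBB'.symm xb xb' hxb hxb'
  have hyy : T.anc yb' yb := bm2.2.2.2 B hBl hσBB' yb' yb hyb' hyb
  have hxbne : xb ≠ xb' := by
    intro h
    apply hnE1
    rw [hiff]
    refine ⟨hAl, hB'l, ?_, ?_⟩
    · rw [hcol, hcol, ← hbb']; exact hab
    · intro y' hy' hcy' w w' hw hw'
      have hwx : w = xb' := T.lca_unique hw hxb'
      have hcy : σT y' = σT B := by rw [hcy', hσBB']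
      have := bm1.2.2.2 y' hy' hcy xb w' hxb hw'
      rw [hwx, ← h]
      exact this
  have hybne : yb' ≠ yb := by
    intro h
    apply hnE2
    rw [hiff]
    refine ⟨hCl, hBl, ?_, ?_⟩
    · rw [hcol, hcol, hbb']; exact hcb
    · intro y' hy' hcy' w w' hw hw'
      have hwx : w = yb := T.lca_unique hw hyb
      have hcy : σT y' = σT B' := by rw [hcy', ← hσBB']
      have := bm2.2.2.2 y' hy' hcy yb' w' hyb' hw'
      rw [hwx, ← h]
      exact this
  -- general fact: if X is not below u then lca(A,X) = lca(C,X) lies strictly above u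
  have hnot : ∀ (X xX yX : V), ¬ T.anc X u → T.isLCA xX A X → T.isLCA yX Cg X →
      T.anc u xX ∧ u ≠ xX ∧ xX = yX := by
    intro X xX yX hX hxX hyX
    have hux : T.anc u xX := by
      rcases T.anc_total hxX.1 hu.1 with h | h
      · exact absurd (hxX.2.1.trans h) hX
      · exact h
    have hune : u ≠ xX := by
      intro h; exact hX (h ▸ hxX.2.1)
    have huy : T.anc u yX := by
      rcases T.anc_total hyX.1 hu.2.1 with h | h
      · exact absurd (hyX.2.1.trans h) hX
      · exact h
    have h1 : T.anc Cg xX := hu.2.1.trans hux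
    have h2 : T.anc yX xX := hyX.2.2 xX h1 hxX.2.1
    have h3 : T.anc A yX := hu.1.trans huy
    have h4 : T.anc xX yX := hxX.2.2 yX h3 hyX.2.1
    exact ⟨hux, hune, T.anc_antisymm h4 h2⟩
  have hBu : T.anc B u := by
    by_contra hB
    obtain ⟨hux, _, heq⟩ := hnot B xb yb hB hxb hyb
    by_cases hB' : T.anc B' u
    · have h1 : T.anc B' xb := hB'.trans hux
      have h2 : T.anc xb' xb := hxb'.2.2 xb hxb.1 h1
      exact hxbne (T.anc_antisymm hxx h2)
    · obtain ⟨_, _, heq'⟩ := hnot B' xb' yb' hB' hxb' hyb'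
      have h2 : T.anc xb' xb := by rw [heq, heq']; exact hyy
      exact hxbne (T.anc_antisymm hxx h2)
  have hB'u : T.anc B' u := by
    by_contra hB'
    obtain ⟨hux', _, heq'⟩ := hnot B' xb' yb' hB' hxb' hyb'
    have h1 : T.anc B yb' := hBu.trans (heq' ▸ hux')
    have h2 : T.anc yb yb' := hyb.2.2 yb' hyb'.1 h1
    exact hybne (T.anc_antisymm hyy h2)
  have hx'u : T.anc xb' u := hxb'.2.2 u hu.1 hB'u
  have hxu : T.anc xb u := hxx.trans hx'u
  have hxne : xb ≠ u := by
    intro h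
    exact hxbne (T.anc_antisymm hxx (h ▸ hx'u))
  have hyu : T.anc yb u := hyb.2.2 u hu.2.1 hBu
  have hy'u : T.anc yb' u := hyy.trans hyu
  have hy'ne : yb' ≠ u := by
    intro h
    exact hybne (T.anc_antisymm hyy (h ▸ hyu))
  have hAne : A ≠ u := by
    intro h
    exact hxne (T.anc_antisymm hxu (h ▸ hxb.1))
  have hCne : Cg ≠ u := by
    intro h
    exact hy'ne (T.anc_antisymm hy'u (h ▸ hyb'.1))
  obtain ⟨v₁, hv₁, hAv₁⟩ := T.exists_child hu.1 hAne
  obtain ⟨v₂, hv₂, hCv₂⟩ := T.exists_child hu.2.1 hCne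
  have hxv₁ : T.anc xb v₁ := by
    rcases T.anc_total hxb.1 hAv₁ with h | h
    · exact h
    · by_cases hvx : v₁ = xb
      · rw [← hvx]; exact Relation.ReflTransGen.refl
      · have h2 : T.anc u xb := T.anc_of_strict hv₁ h hvx
        exact absurd (T.anc_antisymm hxu h2) hxne
  have hyv₂ : T.anc yb' v₂ := by
    rcases T.anc_total hyb'.1 hCv₂ with h | h
    · exact h
    · by_cases hvy : v₂ = yb'
      · rw [← hvy]; exact Relation.ReflTransGen.refl
      · have h2 : T.anc u yb' := T.anc_of_strict hv₂ h hvy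
        exact absurd (T.anc_antisymm hy'u h2) hy'ne
  have hBv₁ : T.anc B v₁ := hxb.2.1.trans hxv₁
  have hB'v₂ : T.anc B' v₂ := hyb'.2.1.trans hyv₂
  have hane : a ≠ b := by intro h; exact hab (h ▸ rfl)
  have hcne2 : c ≠ b' := by intro h; exact hcb (h ▸ rfl)
  have hAv₁ne : A ≠ v₁ := by
    intro h
    have h1 : xb = A := T.anc_antisymm (h ▸ hxv₁) hxb.1
    have h2 : B = A := T.leaf_eq hAl (h1 ▸ hxb.2.1)
    exact hane (hinj h2.symm)
  have hBv₁ne : B ≠ v₁ := by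
    intro h
    have h1 : xb = B := T.anc_antisymm (h ▸ hxv₁) hxb.2.1
    have h2 : A = B := T.leaf_eq hBl (h1 ▸ hxb.1)
    exact hane (hinj h2)
  have hCv₂ne : Cg ≠ v₂ := by
    intro h
    have h1 : yb' = Cg := T.anc_antisymm (h ▸ hyv₂) hyb'.1
    have h2 : B' = Cg := T.leaf_eq hCl (h1 ▸ hyb'.2.1)
    exact hcne2 (hinj h2.symm)
  have hB'v₂ne : B' ≠ v₂ := by
    intro h
    have h1 : yb' = B' := T.anc_antisymm (h ▸ hyv₂) hyb'.2.1
    have h2 : Cg = B' := T.leaf_eq hB'l (h1 ▸ hyb'.1)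
    exact hcne2 (hinj h2)
  have hv₁₂ : v₁ ≠ v₂ := by
    intro h
    have h1 : T.anc Cg v₁ := h ▸ hCv₂
    have h2 : T.anc u v₁ := hu.2.2 v₁ hAv₁ h1
    have h3 : T.anc v₁ u := Relation.ReflTransGen.single hv₁
    exact T.child_ne hv₁ (T.anc_antisymm h3 h2)
  exact ⟨v₁, v₂, hv₁₂, hv₁, hv₂, hAv₁, hAv₁ne, hBv₁, hBv₁ne, hB'v₂, hB'v₂ne, hCv₂, hCv₂ne⟩
end

section
/- Let (T,σ) be a leaf-colored tree with leaf set L, let v be a vertex of T, and let r, s be two distinct colors both occurring among the leaves of the subtree T(v). Then there exist leaves x, y in L(T(v)) with σ(x) = r and σ(y) = s such that x and y are reciprocal best matches in (T,σ). -/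
section Aux

variable {V C : Type*}

private lemma reach_chain {α : Type*} {r : α → α → Prop}
    (hdet : ∀ {p q q' : α}, r p q → r p q' → q = q') {a b : α} :
    ∀ {x}, Relation.ReflTransGen r x a → Relation.ReflTransGen r x b →
      Relation.ReflTransGen r a b ∨ Relation.ReflTransGen r b a := by
  intro x h1
  induction h1 using Relation.ReflTransGen.head_induction_on with
  | refl => exact fun h2 => Or.inl h2
  | head hxc hca ih =>
    intro h2
    rcases Relation.ReflTransGen.cases_head h2 with rfl | ⟨d, hxd, hdb⟩
    · exact Or.inr (Relation.ReflTransGen.head hxc hca)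
    · exact ih ((hdet hxc hxd) ▸ hdb)

private lemma PTree.step_det (T : PTree V) {p q q' : V}
    (h1 : T.parent p = some q) (h2 : T.parent p = some q') : q = q' :=
  Option.some.inj (h1 ▸ h2)

/-- Ancestors of a common vertex are comparable. -/
private lemma PTree.anc_comparable (T : PTree V) {x a b : V}
    (h1 : T.anc x a) (h2 : T.anc x b) : T.anc a b ∨ T.anc b a :=
  reach_chain (r := fun p q => T.parent p = some q) (fun h h' => T.step_det h h') h1 h2

/-- A minimal element of a nonempty set in a finite type, w.r.t. the strict
ancestor preorder. -/
private lemma PTree.exists_min [Fintype V] (T : PTree V) (S : Set V)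
    (hS : S.Nonempty) :
    ∃ u ∈ S, ∀ w ∈ S, ¬ (T.anc w u ∧ ¬ T.anc u w) := by
  set lt : V → V → Prop := fun a b => T.anc a b ∧ ¬ T.anc b a with hlt
  have htrans : IsTrans V lt := ⟨by
    rintro a b c ⟨hab, hba⟩ ⟨hbc, hcb⟩
    exact ⟨hab.trans hbc, fun hca => hcb (hca.trans hab)⟩⟩
  have hirr : IsIrrefl V lt := ⟨fun a h => h.2 h.1⟩
  have hwf : WellFounded lt := Finite.wellFounded_of_trans_of_irrefl lt
  obtain ⟨u, huS, hmin⟩ := hwf.has_min S hS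
  exact ⟨u, huS, fun w hw h => hmin w hw h⟩

/-- Every pair of vertices has a last common ancestor. -/
private lemma PTree.exists_isLCA [Fintype V] (T : PTree V) (x y : V) :
    ∃ u, T.isLCA u x y := by
  have hS : ({w | T.anc x w ∧ T.anc y w} : Set V).Nonempty :=
    ⟨T.root, T.connected x, T.connected y⟩
  obtain ⟨u, ⟨hxu, hyu⟩, hmin⟩ := T.exists_min _ hS
  refine ⟨u, hxu, hyu, ?_⟩
  intro w hxw hyw
  rcases T.anc_comparable hxu hxw with h | h
  · exact h
  · by_cases hc : T.anc u w
    · exact hc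
    · exact absurd ⟨h, hc⟩ (hmin w ⟨hxw, hyw⟩)

private lemma PTree.isLCA_symm (T : PTree V) {u x y : V}
    (h : T.isLCA u x y) : T.isLCA u y x :=
  ⟨h.2.1, h.1, fun w hyw hxw => h.2.2 w hxw hyw⟩

end Aux

/-- If two distinct colors `r` and `s` both occur among the leaves of
the subtree `T(v)`, then there are leaves `x, y ∈ L(T(v))` with `σ(x) = r`,
`σ(y) = s` that are reciprocal best matches in `(T,σ)`. -/
theorem stmt_7 {V C : Type*} [Fintype V] (T : PTree V) (σ : V → C) (v : V)
    (r s : C) (hrs : r ≠ s)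
    (hr : r ∈ T.leafColors σ v) (hs : s ∈ T.leafColors σ v) :
    ∃ x y, T.isLeaf x ∧ T.isLeaf y ∧ T.anc x v ∧ T.anc y v ∧
      σ x = r ∧ σ y = s ∧ T.edge σ x y := by
  classical
  set S : Set V := {u | ∃ x y, T.isLeaf x ∧ T.isLeaf y ∧ T.anc x v ∧ T.anc y v ∧
    σ x = r ∧ σ y = s ∧ T.isLCA u x y} with hSdef
  obtain ⟨x₀, hx₀l, hx₀v, hx₀c⟩ := hr
  obtain ⟨y₀, hy₀l, hy₀v, hy₀c⟩ := hs
  obtain ⟨u₀, hu₀⟩ := T.exists_isLCA x₀ y₀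
  have hSne : S.Nonempty := ⟨u₀, x₀, y₀, hx₀l, hy₀l, hx₀v, hy₀v, hx₀c, hy₀c, hu₀⟩
  obtain ⟨u, ⟨x, y, hxl, hyl, hxv, hyv, hxc, hyc, hlca⟩, hmin⟩ := T.exists_min S hSne
  have huv : T.anc u v := hlca.2.2 v hxv hyv
  have hne : σ x ≠ σ y := by rw [hxc, hyc]; exact hrs
  -- best match x → y
  have hbm1 : T.bestMatch σ x y := by
    refine ⟨hxl, hyl, hne, ?_⟩
    intro y' hy'l hy'c u₁ u₂ h₁ h₂
    have hu₁u : T.anc u₁ u := h₁.2.2 u hlca.1 hlca.2.1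
    have hcomp := T.anc_comparable h₁.1 h₂.1
    -- u₁ and u₂ are both ancestors of x
    have huu₂ : T.anc u u₂ := by
      have hu u' (h' : T.isLCA u' x y') : T.anc u u' ∨ T.anc u' u → T.anc u u' := by
        rintro (h | h)
        · exact h
        · by_cases hc : T.anc u u'
          · exact hc
          · exfalso
            refine hmin u' ⟨x, y', hxl, hy'l, hxv, ?_, hxc, by rw [hy'c, hyc], h'⟩ ⟨h, hc⟩
            exact (h'.2.1.trans h).trans huv
      have := T.anc_comparable hlca.1 h₂.1
      exact hu u₂ h₂ this
    exact hu₁u.trans huu₂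
  have hbm2 : T.bestMatch σ y x := by
    refine ⟨hyl, hxl, fun h => hne h.symm, ?_⟩
    intro x' hx'l hx'c u₁ u₂ h₁ h₂
    have h₁' := T.isLCA_symm h₁
    have h₂' := T.isLCA_symm h₂
    have hu₁u : T.anc u₁ u := h₁'.2.2 u hlca.1 hlca.2.1
    have huu₂ : T.anc u u₂ := by
      have := T.anc_comparable hlca.2.1 h₂.1
      rcases this with h | h
      · exact h
      · by_cases hc : T.anc u u₂
        · exact hc
        · exfalso
          refine hmin u₂ ⟨x', y, hx'l, hyl, ?_, hyv, by rw [hx'c, hxc], hyc, h₂'⟩ ⟨h, hc⟩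
          exact (h₂.2.1.trans h).trans huv
    exact hu₁u.trans huu₂
  exact ⟨x, y, hxl, hyl, hxv, hyv, hxc, hyc, hbm1, hbm2⟩
end
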